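/- arXiv:1510.03191 — 2 statements merged into one kernel-verified Lean document; each statement's English description precedes it below -/
import Mathlib

section
/- The constrained relay-destination rate is concave in the transmission probability: in the half-duplex two-hop relay setting, the function g : [0,1] → ℝ defined by g(P) := sup over PMFs q on X2 with q(0) = 1 − P of I(q, W2) is concave on [0,1]. -/
/-!
On the probability simplex, `I(q, W) = (H(Y) - H(Y | X)) / log 2`, where the output entropy
`H(Y) = ∑_b negMulLog ((q ᵥ* W) b)` is concave in `q` (a concave function of a linear map)
and `H(Y | X) = ∑_a q a · H(W a)` is linear in `q`; so `I(·, W)` is concave, and it is bounded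
by `|Y| / log 2`. The constraint `1 - q 0 = P` is affine in `q`, so mixing inputs feasible for
`P₁` and `P₂` gives an input feasible for the mixture of `P₁` and `P₂`, whose rate is at least
the mixture of the two rates. Taking suprema, `g` is concave.
-/

open Finset

/-- Mutual information `I(p, W)` (in bits) of a finite input distribution `p` and a
channel `W`, with the convention that terms with `p a * W a b = 0` contribute `0`. -/
noncomputable def mutInfo {A B : Type*} [Fintype A] [Fintype B]
    (p : A → ℝ) (W : A → B → ℝ) : ℝ :=
  ∑ a, ∑ b, if p a * W a b = 0 then 0
    else p a * W a b * Real.logb 2 (W a b / ∑ a', p a' * W a' b)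

/-- `p` is a probability mass function on the finite type `A`. -/
def IsPMF {A : Type*} [Fintype A] (p : A → ℝ) : Prop :=
  (∀ a, 0 ≤ p a) ∧ ∑ a, p a = 1

open Real

theorem concaveOn_finset_sum {𝕜 E β ι : Type*} [Semiring 𝕜] [PartialOrder 𝕜]
    [AddCommMonoid E] [SMul 𝕜 E] [AddCommMonoid β] [PartialOrder β] [IsOrderedAddMonoid β]
    [Module 𝕜 β] {s : Set E} {f : ι → E → β} (t : Finset ι) (hs : Convex 𝕜 s)
    (hf : ∀ i ∈ t, ConcaveOn 𝕜 s (f i)) : ConcaveOn 𝕜 s fun x => ∑ i ∈ t, f i x := by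
  refine ⟨hs, fun x hx y hy a b ha hb hab => ?_⟩
  simp only [Finset.smul_sum, ← Finset.sum_add_distrib]
  exact Finset.sum_le_sum fun i hi => (hf i hi).2 hx hy ha hb hab

theorem ConcaveOn.sSup_image_fiber {E F : Type*} [AddCommGroup E] [Module ℝ E]
    [AddCommGroup F] [Module ℝ F] {C : Set E} {f : E → ℝ} (hf : ConcaveOn ℝ C f)
    (hbdd : BddAbove (f '' C)) (φ : E →ᵃ[ℝ] F) {D : Set F} (hD : Convex ℝ D)
    (hfiber : ∀ y ∈ D, ∃ x ∈ C, φ x = y) :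
    ConcaveOn ℝ D fun y => sSup (f '' {x ∈ C | φ x = y}) := by
  have hne : ∀ y ∈ D, (f '' {x ∈ C | φ x = y}).Nonempty := fun y hy =>
    let ⟨x, hxC, hx⟩ := hfiber y hy
    ⟨f x, x, ⟨hxC, hx⟩, rfl⟩
  have hbdd' : ∀ y, BddAbove (f '' {x ∈ C | φ x = y}) := fun y =>
    hbdd.mono (Set.image_mono (Set.sep_subset _ _))
  refine ⟨hD, fun y₁ hy₁ y₂ hy₂ a b ha hb hab => ?_⟩
  rw [← Real.sSup_smul_of_nonneg ha, ← Real.sSup_smul_of_nonneg hb,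
    ← csSup_add ((hne y₁ hy₁).smul_set) ((hbdd' y₁).smul_of_nonneg ha)
      ((hne y₂ hy₂).smul_set) ((hbdd' y₂).smul_of_nonneg hb)]
  refine csSup_le (((hne y₁ hy₁).smul_set).add (hne y₂ hy₂).smul_set) ?_
  rintro _ ⟨_, ⟨_, ⟨x₁, ⟨hx₁C, rfl⟩, rfl⟩, rfl⟩, _, ⟨_, ⟨x₂, ⟨hx₂C, rfl⟩, rfl⟩, rfl⟩, rfl⟩
  have hmem : a • x₁ + b • x₂ ∈ {x ∈ C | φ x = a • φ x₁ + b • φ x₂} :=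
    ⟨hf.1 hx₁C hx₂C ha hb hab, Convex.combo_affine_apply hab⟩
  exact (hf.2 hx₁C hx₂C ha hb hab).trans (le_csSup (hbdd' _) ⟨_, hmem, rfl⟩)

section MutualInformation

variable {A B : Type*} [Fintype A] [Fintype B]

theorem IsPMF.le_one {p : A → ℝ} (hp : IsPMF p) (a : A) : p a ≤ 1 :=
  hp.2 ▸ Finset.single_le_sum (fun i _ => hp.1 i) (Finset.mem_univ a)

theorem mutInfo_eq_entropy_sub_condEntropy {p : A → ℝ} {W : A → B → ℝ} (hp : ∀ a, 0 ≤ p a)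
    (hW : ∀ a b, 0 ≤ W a b) :
    mutInfo p W =
      (∑ b, negMulLog (∑ a, p a * W a b) - ∑ a, p a * ∑ b, negMulLog (W a b)) / log 2 := by
  have hterm : ∀ a b, (if p a * W a b = 0 then 0
      else p a * W a b * logb 2 (W a b / ∑ a', p a' * W a' b)) =
      p a * W a b * (log (W a b) - log (∑ a', p a' * W a' b)) / log 2 := by
    intro a b
    split_ifs with h
    · rw [h, zero_mul, zero_div]
    · have hS : 0 < ∑ a', p a' * W a' b :=
        (lt_of_le_of_ne (mul_nonneg (hp a) (hW a b)) (Ne.symm h)).trans_le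
          (Finset.single_le_sum (fun i _ => mul_nonneg (hp i) (hW i b)) (Finset.mem_univ a))
      rw [logb, log_div (right_ne_zero_of_mul h) hS.ne', mul_div_assoc]
  simp only [mutInfo, hterm, ← Finset.sum_div]
  congr 1
  simp only [negMulLog, mul_sub, Finset.sum_sub_distrib, Finset.mul_sum]
  rw [Finset.sum_comm (f := fun a b => p a * W a b * log (∑ a', p a' * W a' b))]
  simp only [neg_mul, mul_neg, Finset.sum_neg_distrib, Finset.sum_mul, mul_assoc]
  ring

theorem concaveOn_mutInfo {W : A → B → ℝ} (hW : ∀ a b, 0 ≤ W a b) :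
    ConcaveOn ℝ (Set.Ici 0) fun p : A → ℝ => mutInfo p W := by
  have hentropy : ConcaveOn ℝ (Set.Ici 0) fun p : A → ℝ => ∑ b, negMulLog (∑ a, p a * W a b) :=
    concaveOn_finset_sum _ (convex_Ici 0) fun b _ =>
      (concaveOn_negMulLog.comp_linearMap (Fintype.linearCombination ℝ fun a => W a b)).subset
        (fun p hp => Finset.sum_nonneg fun a _ => mul_nonneg (hp a) (hW a b)) (convex_Ici 0)
  have hcondEntropy : ConvexOn ℝ (Set.Ici 0) fun p : A → ℝ => ∑ a, p a * ∑ b, negMulLog (W a b) :=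
    (Fintype.linearCombination ℝ fun a => ∑ b, negMulLog (W a b)).convexOn (convex_Ici 0)
  refine ((hentropy.sub hcondEntropy).smul (inv_nonneg.2 (log_nonneg one_le_two))).congr
    fun p hp => ?_
  rw [mutInfo_eq_entropy_sub_condEntropy hp hW]
  exact inv_mul_eq_div _ _

theorem mutInfo_le_card_div_log_two {p : A → ℝ} {W : A → B → ℝ} (hp : IsPMF p)
    (hW : ∀ a, IsPMF (W a)) : mutInfo p W ≤ Fintype.card B / log 2 := by
  rw [mutInfo_eq_entropy_sub_condEntropy hp.1 fun a => (hW a).1]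
  have hcondEntropy : 0 ≤ ∑ a, p a * ∑ b, negMulLog (W a b) :=
    Finset.sum_nonneg fun a _ => mul_nonneg (hp.1 a) <| Finset.sum_nonneg fun b _ =>
      negMulLog_nonneg ((hW a).1 b) ((hW a).le_one b)
  have hentropy : ∑ b, negMulLog (∑ a, p a * W a b) ≤ Fintype.card B := by
    calc ∑ b, negMulLog (∑ a, p a * W a b) ≤ ∑ _b : B, (1 : ℝ) := by
          refine Finset.sum_le_sum fun b _ => ?_
          have hout : 0 ≤ ∑ a, p a * W a b :=
            Finset.sum_nonneg fun a _ => mul_nonneg (hp.1 a) ((hW a).1 b)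
          linarith [negMulLog_le_one_sub_self hout]
      _ = Fintype.card B := by simp
  gcongr
  linarith

theorem exists_isPMF_apply_eq (hA : 1 < Fintype.card A) (x₀ : A) {c : ℝ} (hc₀ : 0 ≤ c)
    (hc₁ : c ≤ 1) : ∃ q : A → ℝ, IsPMF q ∧ q x₀ = c := by
  classical
  obtain ⟨x₁, hx₁⟩ := Fintype.exists_ne_of_one_lt_card hA x₀
  refine ⟨Pi.single x₀ c + Pi.single x₁ (1 - c), ⟨fun a => ?_, ?_⟩, ?_⟩
  · simp only [Pi.add_apply, Pi.single_apply]
    split_ifs <;> linarith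
  · simp [Finset.sum_add_distrib]
  · simp [hx₁.symm]

end MutualInformation

/-- the constrained relay-destination rate
`g(P) = sup { I(q, W2) : q PMF on X2 with q(0) = 1 − P }`
is concave in the transmission probability `P` on `[0,1]`. -/
theorem constrained_relay_destination_rate_concave
    {X2 Y2 : Type*} [Fintype X2] [Fintype Y2]
    (hX2 : 2 ≤ Fintype.card X2) (x0 : X2)
    (W2 : X2 → Y2 → ℝ) (hW2 : ∀ x2, IsPMF (W2 x2)) :
    ConcaveOn ℝ (Set.Icc (0:ℝ) 1)
      (fun P => sSup {r : ℝ | ∃ q : X2 → ℝ, IsPMF q ∧ q x0 = 1 - P ∧ r = mutInfo q W2}) := by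
  let φ : (X2 → ℝ) →ᵃ[ℝ] ℝ := AffineMap.const ℝ _ 1 - (LinearMap.proj x0).toAffineMap
  have hφ : ∀ q P, φ q = P ↔ q x0 = 1 - P := fun q P => by
    change 1 - q x0 = P ↔ _
    constructor <;> intro h <;> linarith
  have hfiber : ∀ P, {r : ℝ | ∃ q : X2 → ℝ, IsPMF q ∧ q x0 = 1 - P ∧ r = mutInfo q W2} =
      (mutInfo · W2) '' {q ∈ stdSimplex ℝ X2 | φ q = P} := by
    intro P
    ext r
    constructor
    · rintro ⟨q, hq, hq0, rfl⟩
      exact ⟨q, ⟨hq, (hφ q P).2 hq0⟩, rfl⟩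
    · rintro ⟨q, ⟨hq, hq0⟩, rfl⟩
      exact ⟨q, hq, (hφ q P).1 hq0, rfl⟩
  have hconcave : ConcaveOn ℝ (stdSimplex ℝ X2) fun q => mutInfo q W2 :=
    (concaveOn_mutInfo fun a b => (hW2 a).1 b).subset (fun q hq => hq.1) (convex_stdSimplex ℝ X2)
  have hbdd : BddAbove ((mutInfo · W2) '' stdSimplex ℝ X2) :=
    ⟨_, Set.forall_mem_image.2 fun q hq => mutInfo_le_card_div_log_two hq hW2⟩
  simp only [hfiber]
  refine hconcave.sSup_image_fiber hbdd φ (convex_Icc 0 1) fun P hP => ?_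
  obtain ⟨q, hq, hq0⟩ := exists_isPMF_apply_eq hX2 x0 (sub_nonneg.2 hP.2) (sub_le_self 1 hP.1)
  exact ⟨q, hq, (hφ q P).2 hq0⟩
end

section
/- Degenerate case of Theorem 1 (capacity equals the relay-destination capacity): in the half-duplex two-hop relay setting, let C1 := max over PMFs q on X1 of I(q, W1(·|·,0)) and let C2 := max over PMFs q on X2 of I(q, W2), attained at some maximizer q* with P'' := 1 − q*(0). If (1 − P'')·C1 ≥ C2, then sup over joint PMFs p on X1 × X2 of min{ I(X1;Y1|X2), I(X2;Y2) } = C2. -/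
/-!
Sending an input of the form `q1 ⊗ q*` (source and relay independent, the relay using a
capacity-achieving distribution of the second hop) gives `I(X2;Y2) = C2`, while the half-duplex
constraint kills every relay symbol except `0` in `I(X1;Y1|X2)`, leaving `q*(0)·C1 ≥ C2`.
Conversely `I(X2;Y2) ≤ C2` for every joint distribution, so `C2` is the largest value of the
minimum.
-/

open Finset

/-- The `X2`-marginal of a joint PMF on `X1 × X2`. -/
noncomputable def marg2 {X1 X2 : Type*} [Fintype X1] (p : X1 × X2 → ℝ) : X2 → ℝ :=
  fun x2 => ∑ x1, p (x1, x2)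

/-- The conditional mutual information `I(X1; Y1 | X2)` for a joint PMF `p` on `X1 × X2`
and source-relay channel `W1`. -/
noncomputable def condMI {X1 X2 Y1 : Type*} [Fintype X1] [Fintype X2] [Fintype Y1]
    (p : X1 × X2 → ℝ) (W1 : X1 → X2 → Y1 → ℝ) : ℝ :=
  ∑ x2, if 0 < marg2 p x2 then
      marg2 p x2 * mutInfo (fun x1 => p (x1, x2) / marg2 p x2) (fun x1 => W1 x1 x2)
    else 0

theorem mutInfo_const_channel {A B : Type*} [Fintype A] [Fintype B]
    (q : A → ℝ) (hq : ∑ a, q a = 1) (w : B → ℝ) :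
    mutInfo q (fun _ => w) = 0 := by
  unfold mutInfo
  refine sum_eq_zero fun a _ => sum_eq_zero fun b _ => ?_
  have hout : ∑ a', q a' * w b = w b := by rw [← sum_mul, hq, one_mul]
  by_cases hw : w b = 0
  · simp [hw]
  · simp [hout, div_self hw]

theorem IsPMF.marg2 {X1 X2 : Type*} [Fintype X1] [Fintype X2] {p : X1 × X2 → ℝ}
    (hp : IsPMF p) : IsPMF (marg2 p) :=
  ⟨fun _ => sum_nonneg fun _ _ => hp.1 _, by rw [← hp.2, Fintype.sum_prod_type_right]; rfl⟩

theorem IsPMF.mul {A B : Type*} [Fintype A] [Fintype B] {p : A → ℝ} {q : B → ℝ}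
    (hp : IsPMF p) (hq : IsPMF q) : IsPMF (fun x : A × B => p x.1 * q x.2) :=
  ⟨fun x => mul_nonneg (hp.1 _) (hq.1 _),
    by rw [Fintype.sum_prod_type, ← sum_mul_sum, hp.2, hq.2, one_mul]⟩

theorem marg2_mul {X1 X2 : Type*} [Fintype X1] {p : X1 → ℝ} (hp : ∑ x1, p x1 = 1)
    (q : X2 → ℝ) : marg2 (fun x : X1 × X2 => p x.1 * q x.2) = q := by
  funext x2
  simp only [_root_.marg2, ← sum_mul, hp, one_mul]

theorem condMI_mul {X1 X2 Y1 : Type*} [Fintype X1] [Fintype X2] [Fintype Y1]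
    {p : X1 → ℝ} (hp : ∑ x1, p x1 = 1) {q : X2 → ℝ} (hq : ∀ x2, 0 ≤ q x2)
    (W1 : X1 → X2 → Y1 → ℝ) :
    condMI (fun x : X1 × X2 => p x.1 * q x.2) W1 =
      ∑ x2, q x2 * mutInfo p (fun x1 => W1 x1 x2) := by
  unfold condMI
  rw [marg2_mul hp]
  refine sum_congr rfl fun x2 _ => ?_
  rcases (hq x2).lt_or_eq with hpos | hzero
  · simp only [if_pos hpos, mul_div_cancel_right₀ _ hpos.ne']
  · simp [← hzero]

theorem condMI_mul_of_halfDuplex {X1 X2 Y1 : Type*} [Fintype X1] [Fintype X2] [Fintype Y1]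
    [DecidableEq Y1] {p : X1 → ℝ} (hp : ∑ x1, p x1 = 1) {q : X2 → ℝ} (hq : ∀ x2, 0 ≤ q x2)
    (x0 : X2) (y0 : Y1) (W1 : X1 → X2 → Y1 → ℝ)
    (hHD : ∀ x1 x2, x2 ≠ x0 → W1 x1 x2 = fun y1 => if y1 = y0 then 1 else 0) :
    condMI (fun x : X1 × X2 => p x.1 * q x.2) W1 = q x0 * mutInfo p (fun x1 => W1 x1 x0) := by
  rw [condMI_mul hp hq, sum_eq_single x0 _ (fun h => absurd (mem_univ x0) h)]
  intro x2 _ hne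
  have hsilent : (fun x1 => W1 x1 x2) = fun _ y1 => if y1 = y0 then 1 else 0 :=
    funext fun x1 => hHD x1 x2 hne
  rw [hsilent, mutInfo_const_channel p hp, mul_zero]

theorem capacity_degenerate_case_general
    {X1 X2 Y1 Y2 : Type*} [Fintype X1] [Fintype X2] [Fintype Y1] [Fintype Y2]
    [DecidableEq Y1]
    (x0 : X2) (y0 : Y1)
    (W1 : X1 → X2 → Y1 → ℝ)
    (hHD : ∀ x1 x2, x2 ≠ x0 → W1 x1 x2 = fun y1 => if y1 = y0 then 1 else 0)
    (W2 : X2 → Y2 → ℝ)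
    (q1 : X1 → ℝ) (hq1 : IsPMF q1)
    (qstar : X2 → ℝ) (hqstar : IsPMF qstar)
    (hqstarmax : ∀ q : X2 → ℝ, IsPMF q → mutInfo q W2 ≤ mutInfo qstar W2)
    (hdeg : mutInfo qstar W2 ≤ (1 - (1 - qstar x0)) * mutInfo q1 (fun x1 => W1 x1 x0)) :
    sSup {r : ℝ | ∃ p : X1 × X2 → ℝ, IsPMF p ∧
        r = min (condMI p W1) (mutInfo (marg2 p) W2)} = mutInfo qstar W2 := by
  refine IsGreatest.csSup_eq ⟨⟨fun x => q1 x.1 * qstar x.2, hq1.mul hqstar, ?_⟩, ?_⟩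
  · rw [condMI_mul_of_halfDuplex hq1.2 hqstar.1 x0 y0 W1 hHD, marg2_mul hq1.2]
    rw [sub_sub_cancel] at hdeg
    exact (min_eq_right hdeg).symm
  · rintro r ⟨p, hp, rfl⟩
    exact (min_le_right _ _).trans (hqstarmax _ hp.marg2)

/-- degenerate case of Theorem 1: let `C1` be the capacity of the
source-relay channel in reception mode (attained at `q1`) and `C2` the capacity of the
relay-destination channel, attained at a maximizer `q*`, and set `P'' := 1 − q*(0)`.
If `(1 − P'')·C1 ≥ C2`, then the capacity of the two-hop half-duplex relay channel,
`sup_p min{ I(X1;Y1|X2), I(X2;Y2) }`, equals `C2`. -/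
theorem capacity_degenerate_case
    {X1 X2 Y1 Y2 : Type*} [Fintype X1] [Fintype X2] [Fintype Y1] [Fintype Y2]
    [DecidableEq Y1]
    (hX2 : 2 ≤ Fintype.card X2) (x0 : X2) (y0 : Y1)
    (W1 : X1 → X2 → Y1 → ℝ) (hW1 : ∀ x1 x2, IsPMF (W1 x1 x2))
    (hHD : ∀ x1 x2, x2 ≠ x0 → W1 x1 x2 = fun y1 => if y1 = y0 then 1 else 0)
    (W2 : X2 → Y2 → ℝ) (hW2 : ∀ x2, IsPMF (W2 x2))
    (q1 : X1 → ℝ) (hq1 : IsPMF q1)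
    (hq1max : ∀ q : X1 → ℝ, IsPMF q →
      mutInfo q (fun x1 => W1 x1 x0) ≤ mutInfo q1 (fun x1 => W1 x1 x0))
    (qstar : X2 → ℝ) (hqstar : IsPMF qstar)
    (hqstarmax : ∀ q : X2 → ℝ, IsPMF q → mutInfo q W2 ≤ mutInfo qstar W2)
    (hdeg : mutInfo qstar W2 ≤ (1 - (1 - qstar x0)) * mutInfo q1 (fun x1 => W1 x1 x0)) :
    sSup {r : ℝ | ∃ p : X1 × X2 → ℝ, IsPMF p ∧
        r = min (condMI p W1) (mutInfo (marg2 p) W2)} = mutInfo qstar W2 :=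
  capacity_degenerate_case_general x0 y0 W1 hHD W2 q1 hq1 qstar hqstar hqstarmax hdeg
end
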